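/- Let g, h : ℝ → ℝ be C¹ functions and a < b. Then the sup-norm of the difference of the derivatives of the convex envelopes on [a,b] is bounded by the sup-norm of the difference of the derivatives: ‖(conv_{[a,b]} g)' − (conv_{[a,b]} h)'‖_{L∞([a,b])} ≤ ‖g' − h'‖_{L∞([a,b])}. -/

import Mathlib

/-!
Write `E`, `F` for the convex envelopes of `g`, `h`. At an interior point `u` the tangent line of
`E` lies below `g`, and it touches `g` at some `x ≤ u` and at some `x ≥ u`: otherwise a slight
tilt of it would be a convex minorant of `g` exceeding `E u`. Take a contact `x ≤ u` of the tangent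
of `E` with `g` and a contact `y ≥ u` of the tangent of `F` with `h`. If `x < y`, the increment of
`h - g` from `x` to `y` is at least `-C (y - x)` and at most `(F' u - E' u) (y - x)`, whence
`E' u ≤ F' u + C`. If `x = y = u`, both tangents touch at `u`, so `E' u = g' u` and `F' u = h' u`.
At the endpoints the bound follows by the mean value theorem from the monotonicity of the
derivative of a convex function.
-/

open Set

/-- The convex envelope of `g` on the interval `[a,b]`: the pointwise supremum of all
convex functions on `[a,b]` lying below `g` on `[a,b]`. -/
noncomputable def convEnv (a b : ℝ) (g : ℝ → ℝ) : ℝ → ℝ :=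
  fun u => sSup {y : ℝ | ∃ h : ℝ → ℝ, ConvexOn ℝ (Set.Icc a b) h ∧
    (∀ x ∈ Set.Icc a b, h x ≤ g x) ∧ y = h u}

open Filter Topology

lemma ConvexOn.add_mul_sub_le_of_hasDerivWithinAt {S : Set ℝ} {f : ℝ → ℝ} {f' u x : ℝ}
    (hf : ConvexOn ℝ S f) (hu : u ∈ S) (hx : x ∈ S) (hd : HasDerivWithinAt f f' S u) :
    f u + f' * (x - u) ≤ f x := by
  rcases lt_trichotomy x u with hxu | rfl | hux
  · have := hf.slope_le_of_hasDerivWithinAt hx hu hxu hd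
    rw [slope_def_field, div_le_iff₀ (sub_pos.2 hxu)] at this
    linarith
  · simp
  · have := hf.le_slope_of_hasDerivWithinAt hu hx hux hd
    rw [slope_def_field, le_div_iff₀ (sub_pos.2 hux)] at this
    linarith

lemma deriv_eq_of_add_mul_sub_le {g : ℝ → ℝ} {s : Set ℝ} {u c m : ℝ} (hs : s ∈ 𝓝 u)
    (hg : DifferentiableAt ℝ g u) (hle : ∀ x ∈ s, c + m * (x - u) ≤ g x) (hu : g u = c) :
    deriv g u = m := by
  have hmin : IsLocalMin (fun x => g x - (c + m * (x - u))) u :=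
    mem_of_superset hs fun x hx => by simpa [hu] using hle x hx
  have hd : HasDerivAt (fun x => g x - (c + m * (x - u))) (deriv g u - m) u := by
    simpa using hg.hasDerivAt.fun_sub
      (HasDerivAt.const_add c (((hasDerivAt_id u).sub_const u).const_mul m))
  linarith [hmin.hasDerivAt_eq_zero hd]

section Interval

variable {a b C : ℝ}

lemma exists_eq_slope_of_hasDerivWithinAt_Icc {f f' : ℝ → ℝ}
    (hf : ∀ u ∈ Icc a b, HasDerivWithinAt f (f' u) (Icc a b) u) {s t : ℝ}
    (has : a ≤ s) (htb : t ≤ b) (hst : s < t) : ∃ c ∈ Ioo s t, f' c = slope f s t := by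
  rw [slope_def_field]
  refine exists_hasDerivAt_eq_slope f f' hst (fun x hx => ?_) (fun x hx => ?_)
  · exact (hf x ⟨has.trans hx.1, hx.2.trans htb⟩).continuousWithinAt.mono
      (Icc_subset_Icc has htb)
  · exact (hf x ⟨has.trans hx.1.le, hx.2.le.trans htb⟩).hasDerivAt
      (Icc_mem_nhds (has.trans_lt hx.1) (hx.2.trans_le htb))

lemma le_add_of_forall_mem_Ioo_le_add {E F mE mF : ℝ → ℝ} (hab : a < b)
    (hE : ConvexOn ℝ (Icc a b) E) (hF : ConvexOn ℝ (Icc a b) F)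
    (hmE : ∀ u ∈ Icc a b, HasDerivWithinAt E (mE u) (Icc a b) u)
    (hmF : ∀ u ∈ Icc a b, HasDerivWithinAt F (mF u) (Icc a b) u)
    (hle : ∀ u ∈ Ioo a b, mE u ≤ mF u + C) :
    ∀ u ∈ Icc a b, mE u ≤ mF u + C := by
  intro u hu
  rcases hu.1.eq_or_lt with rfl | hau
  · have hslope : ∀ t ∈ Ioo a b, mE a - C ≤ slope F a t := fun t ht => by
      obtain ⟨c, hc, hcF⟩ := exists_eq_slope_of_hasDerivWithinAt_Icc hmF le_rfl ht.2.le ht.1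
      have hc' : c ∈ Icc a b := ⟨hc.1.le, hc.2.le.trans ht.2.le⟩
      have := (hE.le_slope_of_hasDerivWithinAt hu hc' hc.1 (hmE a hu)).trans
        (hE.slope_le_of_hasDerivWithinAt hu hc' hc.1 (hmE c hc'))
      linarith [hle c ⟨hc.1, hc.2.trans ht.2⟩]
    have hlim : Tendsto (slope F a) (𝓝[>] a) (𝓝 (mF a)) :=
      (hasDerivWithinAt_iff_tendsto_slope' self_notMem_Ioi).mp
        ((hmF a hu).mono_of_mem_nhdsWithin (Icc_mem_nhdsGT hab))
    linarith [ge_of_tendsto hlim (eventually_of_mem (Ioo_mem_nhdsGT hab) hslope)]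
  rcases hu.2.eq_or_lt with hub | hub
  · subst u
    have hslope : ∀ t ∈ Ioo a b, slope E b t ≤ mF b + C := fun t ht => by
      obtain ⟨c, hc, hcE⟩ := exists_eq_slope_of_hasDerivWithinAt_Icc hmE ht.1.le le_rfl ht.2
      have hc' : c ∈ Icc a b := ⟨ht.1.le.trans hc.1.le, hc.2.le⟩
      have := (hF.le_slope_of_hasDerivWithinAt hc' hu hc.2 (hmF c hc')).trans
        (hF.slope_le_of_hasDerivWithinAt hc' hu hc.2 (hmF b hu))
      rw [slope_comm]
      linarith [hle c ⟨ht.1.trans hc.1, hc.2⟩]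
    have hlim : Tendsto (slope E b) (𝓝[<] b) (𝓝 (mE b)) :=
      (hasDerivWithinAt_iff_tendsto_slope' self_notMem_Iio).mp
        ((hmE b hu).mono_of_mem_nhdsWithin (Icc_mem_nhdsLT hab))
    exact le_of_tendsto hlim (eventually_of_mem (Ioo_mem_nhdsLT hab) hslope)
  exact hle u ⟨hau, hub⟩

variable {g k mE mF : ℝ → ℝ}

lemma le_convEnv {φ : ℝ → ℝ} (hφ : ConvexOn ℝ (Icc a b) φ) (hφg : ∀ x ∈ Icc a b, φ x ≤ g x)
    {u : ℝ} (hu : u ∈ Icc a b) : φ u ≤ convEnv a b g u :=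
  le_csSup ⟨g u, by rintro _ ⟨ψ, -, hψg, rfl⟩; exact hψg u hu⟩ ⟨φ, hφ, hφg, rfl⟩

lemma convEnv_le_of_forall_le (hg : ContinuousOn g (Icc a b)) {u c : ℝ}
    (hc : ∀ φ : ℝ → ℝ, ConvexOn ℝ (Icc a b) φ → (∀ x ∈ Icc a b, φ x ≤ g x) → φ u ≤ c) :
    convEnv a b g u ≤ c := by
  obtain ⟨m, hm⟩ := isCompact_Icc.bddBelow_image hg
  refine csSup_le ⟨m, fun _ => m, convexOn_const m (convex_Icc a b),
    fun x hx => hm (mem_image_of_mem g hx), rfl⟩ ?_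
  rintro _ ⟨φ, hφ, hφg, rfl⟩
  exact hc φ hφ hφg

lemma convEnv_le (hg : ContinuousOn g (Icc a b)) {u : ℝ} (hu : u ∈ Icc a b) :
    convEnv a b g u ≤ g u :=
  convEnv_le_of_forall_le hg fun _ _ hφg => hφg u hu

lemma convexOn_convEnv (hg : ContinuousOn g (Icc a b)) :
    ConvexOn ℝ (Icc a b) (convEnv a b g) := by
  refine ⟨convex_Icc a b, fun x hx y hy p q hp hq hpq =>
    convEnv_le_of_forall_le hg fun φ hφ hφg => ?_⟩
  calc φ (p • x + q • y) ≤ p • φ x + q • φ y := hφ.2 hx hy hp hq hpq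
    _ ≤ p • convEnv a b g x + q • convEnv a b g y := by
      gcongr
      · exact le_convEnv hφ hφg hx
      · exact le_convEnv hφ hφg hy

lemma convEnv_add_mul_sub_le (hg : ContinuousOn g (Icc a b))
    (hmE : ∀ u ∈ Icc a b, HasDerivWithinAt (convEnv a b g) (mE u) (Icc a b) u)
    {u : ℝ} (hu : u ∈ Icc a b) : ∀ x ∈ Icc a b, convEnv a b g u + mE u * (x - u) ≤ g x :=
  fun _ hx => ((convexOn_convEnv hg).add_mul_sub_le_of_hasDerivWithinAt hu hx (hmE u hu)).trans
    (convEnv_le hg hx)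

lemma exists_eq_affine_of_convEnv_le (hg : ContinuousOn g (Icc a b)) {u c m α β : ℝ}
    (hu : u ∈ Icc a b) (hle : ∀ x ∈ Icc a b, c + m * (x - u) ≤ g x) (hc : convEnv a b g u ≤ c)
    (hαβ : 0 < α * u + β) :
    ∃ x ∈ Icc a b, 0 ≤ α * x + β ∧ g x = c + m * (x - u) := by
  by_contra! hne
  set K := Icc a b ∩ {x | 0 ≤ α * x + β}
  have hK : IsCompact K := isCompact_Icc.inter_right (isClosed_le continuous_const (by fun_prop))
  have huK : u ∈ K := ⟨hu, hαβ.le⟩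
  obtain ⟨x₀, hx₀, hmin⟩ := hK.exists_isMinOn ⟨u, huK⟩
    ((hg.mono inter_subset_left).sub (by fun_prop : Continuous fun x => c + m * (x - u)).continuousOn)
  obtain ⟨M, hM⟩ := hK.bddAbove_image (by fun_prop : Continuous fun x => α * x + β).continuousOn
  set ε := g x₀ - (c + m * (x₀ - u))
  have hε : 0 < ε := sub_pos.2 <| (hle x₀ hx₀.1).lt_of_ne (hne x₀ hx₀.1 hx₀.2).symm
  have hM0 : 0 < M := hαβ.trans_le (hM (mem_image_of_mem _ huK))
  set ψ := fun x => c + m * (x - u) + ε / M * (α * x + β)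
  have hψ : ConvexOn ℝ (Icc a b) ψ := ⟨convex_Icc a b, fun x _ y _ p q _ _ hpq => le_of_eq <| by
    simp only [ψ, smul_eq_mul]; linear_combination (m * u - c - ε / M * β) * hpq⟩
  have hψg : ∀ x ∈ Icc a b, ψ x ≤ g x := by
    intro x hx
    rcases le_or_gt 0 (α * x + β) with hpos | hneg
    · have h1 : ε / M * (α * x + β) ≤ ε := by
        calc ε / M * (α * x + β) ≤ ε / M * M := by
              gcongr; exact hM (mem_image_of_mem _ ⟨hx, hpos⟩)
          _ = ε := div_mul_cancel₀ ε hM0.ne'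
      have h2 : ε ≤ g x - (c + m * (x - u)) := hmin ⟨hx, hpos⟩
      simp only [ψ]; linarith
    · have : ε / M * (α * x + β) < 0 := mul_neg_of_pos_of_neg (div_pos hε hM0) hneg
      simp only [ψ]; linarith [hle x hx]
  have := (le_convEnv hψ hψg hu).trans hc
  have : 0 < ε / M * (α * u + β) := by positivity
  simp only [ψ] at *
  linarith

lemma exists_eq_affine_left_right_of_convEnv_le (hg : ContinuousOn g (Icc a b)) {u c m : ℝ}
    (hu : u ∈ Icc a b) (hle : ∀ x ∈ Icc a b, c + m * (x - u) ≤ g x) (hc : convEnv a b g u ≤ c) :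
    (∃ x ∈ Icc a u, g x = c + m * (x - u)) ∧ ∃ x ∈ Icc u b, g x = c + m * (x - u) := by
  set T := {x ∈ Icc a b | g x = c + m * (x - u)}
  have hT : IsCompact T :=
    isCompact_Icc.of_isClosed_subset (isClosed_Icc.isClosed_eq hg (by fun_prop)) (sep_subset _ _)
  have hleft : ∀ η > 0, ∃ x ∈ T, x ≤ u + η := fun η hη => by
    obtain ⟨x, hx, hxη, hgx⟩ := exists_eq_affine_of_convEnv_le (α := -1) (β := u + η) hg hu hle hc
      (by linarith)
    exact ⟨x, ⟨hx, hgx⟩, by linarith⟩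
  have hright : ∀ η > 0, ∃ x ∈ T, u - η ≤ x := fun η hη => by
    obtain ⟨x, hx, hxη, hgx⟩ := exists_eq_affine_of_convEnv_le (α := 1) (β := η - u) hg hu hle hc
      (by linarith)
    exact ⟨x, ⟨hx, hgx⟩, by linarith⟩
  have hTne : T.Nonempty := let ⟨x, hx, _⟩ := hleft 1 one_pos; ⟨x, hx⟩
  obtain ⟨⟨haT, -⟩, hgaT⟩ := hT.sInf_mem hTne
  obtain ⟨⟨-, hbT⟩, hgbT⟩ := hT.sSup_mem hTne
  refine ⟨⟨sInf T, ⟨haT, le_of_forall_pos_le_add fun η hη => ?_⟩, hgaT⟩,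
    ⟨sSup T, ⟨le_of_forall_pos_le_add fun η hη => ?_, hbT⟩, hgbT⟩⟩
  · obtain ⟨x, hx, hxu⟩ := hleft η hη
    exact (csInf_le hT.bddBelow hx).trans hxu
  · obtain ⟨x, hx, hxu⟩ := hright η hη
    linarith [le_csSup hT.bddAbove hx]

lemma deriv_convEnv_le_add_of_mem_Ioo (hg : ContinuousOn g (Icc a b))
    (hk : ContinuousOn k (Icc a b)) (hg' : DifferentiableOn ℝ g (Ioo a b))
    (hk' : DifferentiableOn ℝ k (Ioo a b))
    (hmE : ∀ u ∈ Icc a b, HasDerivWithinAt (convEnv a b g) (mE u) (Icc a b) u)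
    (hmF : ∀ u ∈ Icc a b, HasDerivWithinAt (convEnv a b k) (mF u) (Icc a b) u)
    (hC : ∀ x ∈ Ioo a b, deriv g x ≤ deriv k x + C) {u : ℝ} (hu : u ∈ Ioo a b) :
    mE u ≤ mF u + C := by
  have hu' : u ∈ Icc a b := Ioo_subset_Icc_self hu
  have hℓE := convEnv_add_mul_sub_le hg hmE hu'
  have hℓF := convEnv_add_mul_sub_le hk hmF hu'
  obtain ⟨⟨x, hx, hgx⟩, -⟩ := exists_eq_affine_left_right_of_convEnv_le hg hu' hℓE le_rfl
  obtain ⟨-, ⟨y, hy, hky⟩⟩ := exists_eq_affine_left_right_of_convEnv_le hk hu' hℓF le_rfl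
  have hxI : x ∈ Icc a b := ⟨hx.1, hx.2.trans hu'.2⟩
  have hyI : y ∈ Icc a b := ⟨hu'.1.trans hy.1, hy.2⟩
  rcases (hx.2.trans hy.1).lt_or_eq with hxy | hxy
  · have hgrowth : -C * (y - x) ≤ (k y - g y) - (k x - g x) := by
      refine (convex_Icc a b).mul_sub_le_image_sub_of_le_deriv (hk.sub hg) ?_ ?_ x hxI y hyI hxy.le
      · rw [interior_Icc]; exact hk'.sub hg'
      · rw [interior_Icc]
        intro z hz
        rw [deriv_sub (hk'.differentiableAt (Ioo_mem_nhds hz.1 hz.2))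
          (hg'.differentiableAt (Ioo_mem_nhds hz.1 hz.2))]
        linarith [hC z hz]
    have : (mE u - mF u - C) * (y - x) ≤ 0 := by
      linarith [hℓE y hyI, hℓF x hxI]
    linarith [nonpos_of_mul_nonpos_left this (sub_pos.2 hxy)]
  · rw [le_antisymm hx.2 (hxy ▸ hy.1)] at hgx
    rw [le_antisymm (hxy ▸ hx.2) hy.1] at hky
    have hnhds : Icc a b ∈ 𝓝 u := Icc_mem_nhds hu.1 hu.2
    have hgE := deriv_eq_of_add_mul_sub_le hnhds (hg'.differentiableAt (Ioo_mem_nhds hu.1 hu.2))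
      hℓE (by simpa using hgx)
    have hkF := deriv_eq_of_add_mul_sub_le hnhds (hk'.differentiableAt (Ioo_mem_nhds hu.1 hu.2))
      hℓF (by simpa using hky)
    linarith [hC u hu]

lemma deriv_convEnv_le_add (hab : a < b) (hg : ContinuousOn g (Icc a b))
    (hk : ContinuousOn k (Icc a b)) (hg' : DifferentiableOn ℝ g (Ioo a b))
    (hk' : DifferentiableOn ℝ k (Ioo a b))
    (hmE : ∀ u ∈ Icc a b, HasDerivWithinAt (convEnv a b g) (mE u) (Icc a b) u)
    (hmF : ∀ u ∈ Icc a b, HasDerivWithinAt (convEnv a b k) (mF u) (Icc a b) u)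
    (hC : ∀ x ∈ Ioo a b, deriv g x ≤ deriv k x + C) :
    ∀ u ∈ Icc a b, mE u ≤ mF u + C :=
  le_add_of_forall_mem_Ioo_le_add hab (convexOn_convEnv hg) (convexOn_convEnv hk) hmE hmF
    fun _ hu => deriv_convEnv_le_add_of_mem_Ioo hg hk hg' hk' hmE hmF hC hu

end Interval

theorem stmt7 (a b : ℝ) (hab : a < b) (g h : ℝ → ℝ)
    (hg : ContDiff ℝ 1 g) (hh : ContDiff ℝ 1 h) (m₁ m₂ : ℝ → ℝ)
    (hm₁ : ∀ u ∈ Set.Icc a b,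
      HasDerivWithinAt (convEnv a b g) (m₁ u) (Set.Icc a b) u)
    (hm₂ : ∀ u ∈ Set.Icc a b,
      HasDerivWithinAt (convEnv a b h) (m₂ u) (Set.Icc a b) u)
    (C : ℝ) (hC : ∀ x ∈ Set.Icc a b, |deriv g x - deriv h x| ≤ C) :
    ∀ u ∈ Set.Icc a b, |m₁ u - m₂ u| ≤ C := by
  have hgc := hg.continuous.continuousOn (s := Icc a b)
  have hhc := hh.continuous.continuousOn (s := Icc a b)
  have hgd := (hg.differentiable one_ne_zero).differentiableOn (s := Ioo a b)
  have hhd := (hh.differentiable one_ne_zero).differentiableOn (s := Ioo a b)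
  have hC' x (hx : x ∈ Ioo a b) := abs_le.mp (hC x (Ioo_subset_Icc_self hx))
  intro u hu
  have h₁ := deriv_convEnv_le_add (C := C) hab hgc hhc hgd hhd hm₁ hm₂
    (fun x hx => by linarith [hC' x hx]) u hu
  have h₂ := deriv_convEnv_le_add (C := C) hab hhc hgc hhd hgd hm₂ hm₁
    (fun x hx => by linarith [hC' x hx]) u hu
  exact abs_le.mpr ⟨by linarith, by linarith⟩
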